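/- Let f : ℝ^d → ℝ be convex and differentiable with minimizer x_⋆, and suppose ‖∇f(x)‖ ≤ G for all x with ‖x − x_⋆‖ ≤ ‖x_0 − x_⋆‖. Then the deterministic schedulep method with c_t = 1/(t+1), β ∈ [0,1), γ_max = ∞, z_{−1} = x_0 satisfies the anytime last-iterate bound f(x_t) − f(x_⋆) ≤ G‖x_0 − x_⋆‖ / √(t+1) for every t ≥ 0. -/

import Mathlib

open scoped InnerProductSpace

theorem grad_ineq_aux {d : ℕ} (f : EuclideanSpace ℝ (Fin d) → ℝ)
    (hconv : ConvexOn ℝ Set.univ f) (hdiff : Differentiable ℝ f)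
    (u v : EuclideanSpace ℝ (Fin d)) :
    f v + ⟪gradient f v, u - v⟫_ℝ ≤ f u := by
  have hline : HasDerivAt (fun t : ℝ => v + t • (u - v)) (u - v) 0 := by
    simpa using ((hasDerivAt_id (0:ℝ)).smul_const (u - v)).const_add v
  have hgrad : HasFDerivAt f
      ((InnerProductSpace.toDual ℝ (EuclideanSpace ℝ (Fin d))) (gradient f v))
      ((fun t : ℝ => v + t • (u - v)) 0) := by
    simpa using ((hdiff v).hasGradientAt).hasFDerivAt
  have hcomp : HasDerivAt (fun t : ℝ => f (v + t • (u - v)))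
      (⟪gradient f v, u - v⟫_ℝ) 0 := by
    have := hgrad.comp_hasDerivAt 0 hline
    simpa [InnerProductSpace.toDual_apply_apply, Function.comp_def] using this
  have hφ : ConvexOn ℝ Set.univ (fun t : ℝ => f (v + t • (u - v))) := by
    refine ⟨convex_univ, fun t1 _ t2 _ a b ha hb hab => ?_⟩
    have hb' : b = 1 - a := by linarith
    subst hb'
    have key : (a • t1 + (1-a) • t2) • (u - v) + v =
        a • (v + t1 • (u - v)) + (1-a) • (v + t2 • (u - v)) := by
      simp only [smul_eq_mul]
      module
    calc f (v + (a • t1 + (1-a) • t2) • (u - v))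
        = f (a • (v + t1 • (u - v)) + (1-a) • (v + t2 • (u - v))) := by
          rw [← key]; congr 1; module
      _ ≤ a * f (v + t1 • (u - v)) + (1-a) * f (v + t2 • (u - v)) :=
          hconv.2 (Set.mem_univ _) (Set.mem_univ _) ha hb hab
  have hs := hφ.le_slope_of_hasDerivAt (Set.mem_univ (0:ℝ)) (Set.mem_univ (1:ℝ))
    one_pos hcomp
  rw [slope_def_field] at hs
  simp only [one_smul, zero_smul, add_zero, sub_zero, div_one] at hs
  have huv : v + (u - v) = u := by module
  rw [huv] at hs
  linarith

set_option maxHeartbeats 2000000 in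
open Classical in
/-- Anytime last-iterate convergence of the deterministic schedulep method.
Here `Z t` denotes `z_{t-1}`, so `Z 0 = z_{-1} = x 0` and `Z (t+1) = z_t`. -/
theorem schedulep_convergence {d : ℕ}
    (f : EuclideanSpace ℝ (Fin d) → ℝ)
    (hconv : ConvexOn ℝ Set.univ f) (hdiff : Differentiable ℝ f)
    (xs : EuclideanSpace ℝ (Fin d)) (hmin : ∀ v, f xs ≤ f v)
    (G : ℝ)
    (β : ℝ) (hβ0 : 0 ≤ β) (hβ1 : β < 1)
    (x y Z : ℕ → EuclideanSpace ℝ (Fin d)) (γ : ℕ → ℝ)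
    (hG : ∀ v : EuclideanSpace ℝ (Fin d),
      ‖v - xs‖ ≤ ‖x 0 - xs‖ → ‖gradient f v‖ ≤ G)
    (hZ0 : Z 0 = x 0)
    (hy : ∀ t, y t = (1 - β) • Z t + β • x t)
    (hγ : ∀ t, γ t = if gradient f (y t) = 0 then 0 else
      (max (f (y t) - f xs + β * ⟪gradient f (y t), Z t - x t⟫_ℝ) 0) /
        ‖gradient f (y t)‖ ^ 2)
    (hZ : ∀ t, Z (t + 1) = Z t - γ t • gradient f (y t))
    (hx : ∀ t, x (t + 1) =
      (((t : ℝ) + 1) / ((t : ℝ) + 2)) • x t + (1 / ((t : ℝ) + 2)) • Z (t + 1)) :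
    ∀ t, f (x t) - f xs ≤ G * ‖x 0 - xs‖ / Real.sqrt ((t : ℝ) + 1) := by
  have grad : ∀ u v, f v + ⟪gradient f v, u - v⟫_ℝ ≤ f u :=
    grad_ineq_aux f hconv hdiff
  set D := ‖x 0 - xs‖ with hDdef
  have hD0 : 0 ≤ D := norm_nonneg _
  have hG0 : 0 ≤ G := le_trans (norm_nonneg _) (hG xs (by simp [hD0]))
  -- shorthand for s t
  set s : ℕ → ℝ := fun t =>
    max (f (y t) - f xs + β * ⟪gradient f (y t), Z t - x t⟫_ℝ) 0 with hsdef
  have hs0 : ∀ t, 0 ≤ s t := fun t => le_max_right _ _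
  -- if gradient is zero then s t = 0
  have hszero : ∀ t, gradient f (y t) = 0 → s t = 0 := by
    intro t hgt
    have h1 := grad xs (y t)
    rw [hgt] at h1
    simp only [inner_zero_left, add_zero] at h1
    have : f (y t) = f xs := le_antisymm h1 (hmin _)
    simp only [hsdef, hgt, this, inner_zero_left, mul_zero, sub_self, add_zero, max_self]
  -- γ t * ‖g t‖² = s t
  have hγs : ∀ t, γ t * ‖gradient f (y t)‖ ^ 2 = s t := by
    intro t
    by_cases hgt : gradient f (y t) = 0
    · rw [hγ t, if_pos hgt, hszero t hgt]; ring
    · rw [hγ t, if_neg hgt, div_mul_cancel₀]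
      exact pow_ne_zero 2 (norm_ne_zero_iff.2 hgt)
  have hγ0 : ∀ t, 0 ≤ γ t := by
    intro t
    rw [hγ t]
    split
    · exact le_refl _
    · exact div_nonneg (le_max_right _ _) (by positivity)
  -- inner lower bound: ⟪g t, Z t - xs⟫ ≥ h t
  have hinner : ∀ t, f (y t) - f xs + β * ⟪gradient f (y t), Z t - x t⟫_ℝ ≤
      ⟪gradient f (y t), Z t - xs⟫_ℝ := by
    intro t
    have hid : Z t - xs = (y t - xs) + β • (Z t - x t) := by
      rw [hy t]; module
    rw [hid, inner_add_right, real_inner_smul_right]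
    have h1 := grad xs (y t)
    have h2 : xs - y t = -(y t - xs) := by module
    rw [h2, inner_neg_right] at h1
    linarith
  -- descent inequality
  have hdesc : ∀ t, ‖Z (t+1) - xs‖ ^ 2 ≤ ‖Z t - xs‖ ^ 2 - γ t * s t := by
    intro t
    have hexp : ‖Z (t+1) - xs‖ ^ 2 = ‖Z t - xs‖ ^ 2
        - 2 * (γ t * ⟪gradient f (y t), Z t - xs⟫_ℝ)
        + γ t ^ 2 * ‖gradient f (y t)‖ ^ 2 := by
      have : Z (t+1) - xs = (Z t - xs) - γ t • gradient f (y t) := by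
        rw [hZ t]; module
      rw [this, norm_sub_sq_real, real_inner_smul_right, norm_smul,
        Real.norm_eq_abs, mul_pow, sq_abs, real_inner_comm]
    have hγsmul : γ t * s t ≤ γ t * ⟪gradient f (y t), Z t - xs⟫_ℝ := by
      rcases lt_or_eq_of_le (hs0 t) with hpos | hzero
      · have hst : s t = f (y t) - f xs + β * ⟪gradient f (y t), Z t - x t⟫_ℝ := by
          rcases le_or_gt 0 (f (y t) - f xs + β * ⟪gradient f (y t), Z t - x t⟫_ℝ) with hle | hlt
          · exact max_eq_left hle
          · exfalso
            have hz : s t = 0 := max_eq_right hlt.le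
            rw [hz] at hpos
            exact lt_irrefl 0 hpos
        exact mul_le_mul_of_nonneg_left (hst ▸ hinner t) (hγ0 t)
      · have hγz : γ t = 0 := by
          by_cases hgt : gradient f (y t) = 0
          · rw [hγ t, if_pos hgt]
          · have := hγs t
            rw [← hzero] at this
            have hn : ‖gradient f (y t)‖ ^ 2 ≠ 0 :=
              pow_ne_zero 2 (norm_ne_zero_iff.2 hgt)
            rcases mul_eq_zero.1 this with h | h
            · exact h
            · exact absurd h hn
        simp [hγz]
    have hquad : γ t ^ 2 * ‖gradient f (y t)‖ ^ 2 = γ t * s t := by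
      rw [← hγs t]; ring
    rw [hexp, hquad]
    linarith
  -- Z stays in the ball
  have hZball : ∀ t, ‖Z t - xs‖ ≤ D := by
    intro t
    induction t with
    | zero => rw [hZ0]
    | succ n ih =>
      have h1 := hdesc n
      have h2 : 0 ≤ γ n * s n := mul_nonneg (hγ0 n) (hs0 n)
      have h3 : ‖Z (n+1) - xs‖ ^ 2 ≤ ‖Z n - xs‖ ^ 2 := by linarith
      have h4 : ‖Z (n+1) - xs‖ ≤ ‖Z n - xs‖ := by
        nlinarith [norm_nonneg (Z (n+1) - xs), norm_nonneg (Z n - xs)]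
      exact h4.trans ih
  -- x stays in the ball
  have hxball : ∀ t, ‖x t - xs‖ ≤ D := by
    intro t
    induction t with
    | zero => exact le_refl D
    | succ n ih =>
      have hid : x (n+1) - xs = (((n:ℝ)+1)/((n:ℝ)+2)) • (x n - xs)
          + (1/((n:ℝ)+2)) • (Z (n+1) - xs) := by
        rw [hx n]
        match_scalars <;> (field_simp <;> ring)
      have hc1 : (0:ℝ) ≤ ((n:ℝ)+1)/((n:ℝ)+2) := by positivity
      have hc2 : (0:ℝ) ≤ 1/((n:ℝ)+2) := by positivity
      calc ‖x (n+1) - xs‖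
          ≤ ‖(((n:ℝ)+1)/((n:ℝ)+2)) • (x n - xs)‖ + ‖(1/((n:ℝ)+2)) • (Z (n+1) - xs)‖ := by
            rw [hid]; exact norm_add_le _ _
        _ = (((n:ℝ)+1)/((n:ℝ)+2)) * ‖x n - xs‖ + (1/((n:ℝ)+2)) * ‖Z (n+1) - xs‖ := by
            rw [norm_smul, norm_smul, Real.norm_eq_abs, Real.norm_eq_abs,
              abs_of_nonneg hc1, abs_of_nonneg hc2]
        _ ≤ (((n:ℝ)+1)/((n:ℝ)+2)) * D + (1/((n:ℝ)+2)) * D := by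
            have := hZball (n+1)
            gcongr
        _ = D := by field_simp; ring
  -- gradient norm bound
  have hgball : ∀ t, ‖gradient f (y t)‖ ≤ G := by
    intro t
    apply hG
    have hid : y t - xs = (1-β) • (Z t - xs) + β • (x t - xs) := by
      rw [hy t]; module
    calc ‖y t - xs‖ ≤ ‖(1-β) • (Z t - xs)‖ + ‖β • (x t - xs)‖ := by
          rw [hid]; exact norm_add_le _ _
      _ = (1-β) * ‖Z t - xs‖ + β * ‖x t - xs‖ := by
          rw [norm_smul, norm_smul, Real.norm_eq_abs, Real.norm_eq_abs,
            abs_of_nonneg (by linarith : (0:ℝ) ≤ 1-β), abs_of_nonneg hβ0]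
      _ ≤ (1-β) * D + β * D := by
          have h1 := hZball t
          have h2 := hxball t
          have h3 : (0:ℝ) ≤ 1 - β := by linarith
          nlinarith
      _ = D := by ring
  -- per-step squared bound
  have hsq : ∀ t, s t ^ 2 ≤ G ^ 2 * (‖Z t - xs‖ ^ 2 - ‖Z (t+1) - xs‖ ^ 2) := by
    intro t
    have h1 := hdesc t
    rcases lt_or_eq_of_le (hs0 t) with hpos | hzero
    · have hgt : gradient f (y t) ≠ 0 := by
        intro hz
        rw [hszero t hz] at hpos
        exact lt_irrefl 0 hpos
      have hgn : 0 < ‖gradient f (y t)‖ := norm_pos_iff.2 hgt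
      have hγt : γ t = s t / ‖gradient f (y t)‖ ^ 2 := by
        have := hγs t
        field_simp at this ⊢
        linarith [this]
      have h2 : s t ^ 2 ≤ G ^ 2 * (γ t * s t) := by
        have hg2 : ‖gradient f (y t)‖ ^ 2 ≤ G ^ 2 := by nlinarith [hgball t, hgn]
        have hγsnn : 0 ≤ γ t * s t := mul_nonneg (hγ0 t) (hs0 t)
        calc s t ^ 2 = (γ t * s t) * ‖gradient f (y t)‖ ^ 2 := by
              rw [pow_two, ← hγs t]; ring
          _ ≤ (γ t * s t) * G ^ 2 := mul_le_mul_of_nonneg_left hg2 hγsnn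
          _ = G ^ 2 * (γ t * s t) := by ring
      have h3 : G ^ 2 * (γ t * s t) ≤ G ^ 2 * (‖Z t - xs‖ ^ 2 - ‖Z (t+1) - xs‖ ^ 2) := by
        apply mul_le_mul_of_nonneg_left _ (by positivity)
        linarith
      linarith
    · rw [← hzero]
      have h2 : 0 ≤ γ t * s t := mul_nonneg (hγ0 t) (hs0 t)
      nlinarith [sq_nonneg G]
  -- telescoped sum bound
  have hsum : ∀ n, ∑ k ∈ Finset.range n, s k ^ 2 ≤ G ^ 2 * (D ^ 2 - ‖Z n - xs‖ ^ 2) := by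
    intro n
    induction n with
    | zero => simp [hZ0, hDdef]
    | succ m ih =>
      rw [Finset.sum_range_succ]
      have := hsq m
      linarith
  -- key anytime bound: (t+1) * (f (x t) - f*) ≤ ∑_{k ≤ t} s k
  have hkey : ∀ t : ℕ, ((t:ℝ)+1) * (f (x t) - f xs) ≤ ∑ k ∈ Finset.range (t+1), s k := by
    intro t
    induction t with
    | zero =>
      have hy0 : y 0 = x 0 := by rw [hy 0, hZ0]; module
      have hs0eq : s 0 = f (x 0) - f xs := by
        have hrfl : s 0 = max (f (y 0) - f xs + β * ⟪gradient f (y 0), Z 0 - x 0⟫_ℝ) 0 := rfl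
        rw [hrfl, hy0, hZ0, sub_self, inner_zero_right, mul_zero, add_zero]
        exact max_eq_left (by linarith [hmin (x 0)])
      rw [Finset.sum_range_one, hs0eq]
      norm_num
    | succ n ih =>
      set T : ℝ := (n : ℝ) with hT
      have hT0 : (0:ℝ) ≤ T := Nat.cast_nonneg n
      have h1β : (0:ℝ) < 1 - β := by linarith
      have hN : (0:ℝ) < (T+1)*(1-β)+1 := by positivity
      have hT2 : (0:ℝ) < T + 2 := by linarith
      have hNne : ((T+1)*(1-β)+1) ≠ 0 := hN.ne'
      have hT2ne : (T+2:ℝ) ≠ 0 := hT2.ne'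
      -- convex combination identity
      have hcomb : x (n+1) = (((T+1)*(1-β))/((T+1)*(1-β)+1)) • x n
          + (1/((T+1)*(1-β)+1)) • y (n+1) := by
        rw [hy (n+1), hx n]
        match_scalars <;> (field_simp <;> ring)
      have e1 : ((T+1)*(1-β)+1) * f (x (n+1)) ≤
          (T+1)*(1-β) * f (x n) + f (y (n+1)) := by
        have ha : (0:ℝ) ≤ ((T+1)*(1-β))/((T+1)*(1-β)+1) := by positivity
        have hb : (0:ℝ) ≤ 1/((T+1)*(1-β)+1) := by positivity
        have hab : ((T+1)*(1-β))/((T+1)*(1-β)+1) + 1/((T+1)*(1-β)+1) = 1 := by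
          field_simp
        have hcv := hconv.2 (Set.mem_univ (x n)) (Set.mem_univ (y (n+1))) ha hb hab
        rw [← hcomb] at hcv
        have := mul_le_mul_of_nonneg_left hcv hN.le
        calc ((T+1)*(1-β)+1) * f (x (n+1)) ≤
            ((T+1)*(1-β)+1) * (((T+1)*(1-β))/((T+1)*(1-β)+1) * f (x n)
              + 1/((T+1)*(1-β)+1) * f (y (n+1))) := this
          _ = (T+1)*(1-β) * f (x n) + f (y (n+1)) := by field_simp
      -- gradient inequality at y (n+1) towards x n
      have hv2 : ((T+2):ℝ) • (x n - y (n+1)) =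
          ((T+1)*(1-β)+1) • (x n - Z (n+1)) := by
        rw [hy (n+1), hx n]
        match_scalars <;> (field_simp <;> ring)
      have hv2' : (T+2) * ⟪gradient f (y (n+1)), x n - y (n+1)⟫_ℝ =
          ((T+1)*(1-β)+1) * ⟪gradient f (y (n+1)), x n - Z (n+1)⟫_ℝ := by
        rw [← real_inner_smul_right, ← real_inner_smul_right, hv2]
      have e2 : (T+2) * (f (y (n+1)) - f (x n)) ≤
          -(((T+1)*(1-β)+1) * ⟪gradient f (y (n+1)), x n - Z (n+1)⟫_ℝ) := by
        have hg := grad (x n) (y (n+1))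
        nlinarith [hv2', hg]
      -- relation between inner products
      have hv3 : ((T+2):ℝ) • (Z (n+1) - x (n+1)) = ((T+1):ℝ) • (Z (n+1) - x n) := by
        rw [hx n]
        match_scalars <;> (field_simp <;> ring)
      have hneg : Z (n+1) - x n = -(x n - Z (n+1)) := by module
      have e3 : (T+2) * ⟪gradient f (y (n+1)), Z (n+1) - x (n+1)⟫_ℝ =
          -((T+1) * ⟪gradient f (y (n+1)), x n - Z (n+1)⟫_ℝ) := by
        rw [← real_inner_smul_right, hv3, real_inner_smul_right, hneg, inner_neg_right]
        ring
      -- combine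
      have hstep : (T+2) * (f (x (n+1)) - f xs) ≤ (T+1) * (f (x n) - f xs)
          + (f (y (n+1)) - f xs
            + β * ⟪gradient f (y (n+1)), Z (n+1) - x (n+1)⟫_ℝ) := by
        have hpos : (0:ℝ) < ((T+1)*(1-β)+1) * (T+2) := by positivity
        rw [← mul_le_mul_iff_right₀ hpos]
        have A1 := mul_le_mul_of_nonneg_left e1 (sq_nonneg (T+2))
        have A2 := mul_le_mul_of_nonneg_left e2
          (mul_nonneg hβ0 (by linarith : (0:ℝ) ≤ T+1))
        have A3 : (((T+1)*(1-β)+1)*β) * ((T+2) *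
              ⟪gradient f (y (n+1)), Z (n+1) - x (n+1)⟫_ℝ) =
            (((T+1)*(1-β)+1)*β) *
              (-((T+1) * ⟪gradient f (y (n+1)), x n - Z (n+1)⟫_ℝ)) := by
          rw [e3]
        nlinarith [A1, A2, A3]
      have hmax : f (y (n+1)) - f xs
            + β * ⟪gradient f (y (n+1)), Z (n+1) - x (n+1)⟫_ℝ ≤ s (n+1) :=
        le_max_left _ _
      rw [Finset.sum_range_succ]
      push_cast
      have ihT : (T+1) * (f (x n) - f xs) ≤ ∑ k ∈ Finset.range (n+1), s k := ih
      calc ((T+1)+1) * (f (x (n+1)) - f xs) = (T+2) * (f (x (n+1)) - f xs) := by ring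
        _ ≤ (T+1) * (f (x n) - f xs) + (f (y (n+1)) - f xs
            + β * ⟪gradient f (y (n+1)), Z (n+1) - x (n+1)⟫_ℝ) := hstep
        _ ≤ (∑ k ∈ Finset.range (n+1), s k) + s (n+1) := by
            exact add_le_add ihT hmax
  -- conclude
  intro t
  have htp : (0:ℝ) < (t:ℝ) + 1 := by positivity
  have hnn : 0 ≤ ∑ k ∈ Finset.range (t+1), s k := Finset.sum_nonneg fun k _ => hs0 k
  have hcs : (∑ k ∈ Finset.range (t+1), s k) ^ 2 ≤
      ((t:ℝ)+1) * ∑ k ∈ Finset.range (t+1), s k ^ 2 := by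
    have := sq_sum_le_card_mul_sum_sq (s := Finset.range (t+1)) (f := s)
    simpa using this
  have h2 : ∑ k ∈ Finset.range (t+1), s k ^ 2 ≤ G^2 * D^2 := by
    have h3 := hsum (t+1)
    nlinarith [sq_nonneg ‖Z (t+1) - xs‖, sq_nonneg G]
  have hsum1 : ∑ k ∈ Finset.range (t+1), s k ≤ Real.sqrt ((t:ℝ)+1) * (G * D) := by
    calc ∑ k ∈ Finset.range (t+1), s k
        = Real.sqrt ((∑ k ∈ Finset.range (t+1), s k) ^ 2) := (Real.sqrt_sq hnn).symm
      _ ≤ Real.sqrt (((t:ℝ)+1) * (G^2*D^2)) := by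
          apply Real.sqrt_le_sqrt
          calc (∑ k ∈ Finset.range (t+1), s k) ^ 2
              ≤ ((t:ℝ)+1) * ∑ k ∈ Finset.range (t+1), s k ^ 2 := hcs
            _ ≤ ((t:ℝ)+1) * (G^2*D^2) := by
                exact mul_le_mul_of_nonneg_left h2 htp.le
      _ = Real.sqrt ((t:ℝ)+1) * (G*D) := by
          rw [Real.sqrt_mul htp.le, show G^2*D^2 = (G*D)^2 by ring,
            Real.sqrt_sq (mul_nonneg hG0 hD0)]
  have hr : 0 < Real.sqrt ((t:ℝ)+1) := Real.sqrt_pos.2 htp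
  rw [le_div_iff₀ hr]
  have hk := (hkey t).trans hsum1
  have hsq' : Real.sqrt ((t:ℝ)+1) * Real.sqrt ((t:ℝ)+1) = (t:ℝ)+1 :=
    Real.mul_self_sqrt htp.le
  apply le_of_mul_le_mul_left _ hr
  calc Real.sqrt ((t:ℝ)+1) * ((f (x t) - f xs) * Real.sqrt ((t:ℝ)+1))
      = (Real.sqrt ((t:ℝ)+1) * Real.sqrt ((t:ℝ)+1)) * (f (x t) - f xs) := by ring
    _ = ((t:ℝ)+1) * (f (x t) - f xs) := by rw [hsq']
    _ ≤ Real.sqrt ((t:ℝ)+1) * (G * D) := hk
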